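/- (Reduction towards the Boyer–Finley equation.) Let p, q : ℝ³ → ℝ be smooth functions of (y¹,y³,y⁴), and define a(y¹,y²,y³,y⁴) = e^{y²} + p(y¹,y³,y⁴) and b(y¹,y²,y³,y⁴) = q(y¹,y³,y⁴) e^{−y²}. Then the equation a_{y⁴} − b_{y³} = a_{y¹} b_{y²} − a_{y²} b_{y¹} holds at every point of ℝ⁴ if and only if the 2-component system p_{y⁴} + q_{y¹} = 0 and q_{y³} = p_{y¹} q holds at every point of ℝ³. -/

import Mathlib

/-!
Every partial derivative of `a = e^{y²} + p` and `b = q e^{-y²}` is a function of `(y¹, y³, y⁴)`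
times `1` or `e^{±y²}`, and the residual `a_{y⁴} − b_{y³} − (a_{y¹} b_{y²} − a_{y²} b_{y¹})`
collapses to `(p_{y⁴} + q_{y¹}) + e^{−y²} (p_{y¹} q − q_{y³})`. As `y²` ranges freely over `ℝ`
while the coefficients do not depend on it, the residual vanishes identically iff both
coefficients do.
-/

noncomputable section

/-- Partial derivative of `f : ℝⁿ → ℝ` in the `i`-th coordinate direction. -/
def pd {n : ℕ} (i : Fin n) (f : (Fin n → ℝ) → ℝ) : (Fin n → ℝ) → ℝ :=
  fun p => fderiv ℝ f p (Pi.single i 1)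

/-- The restriction map `(y¹,y²,y³,y⁴) ↦ (y¹,y³,y⁴)`. -/
def proj134 (w : Fin 4 → ℝ) : Fin 3 → ℝ := fun j => w (![0, 2, 3] j)

section PartialDerivative

variable {m n : ℕ} {f g : (Fin n → ℝ) → ℝ} {w : Fin n → ℝ}

lemma pd_add (hf : DifferentiableAt ℝ f w) (hg : DifferentiableAt ℝ g w) (i : Fin n) :
    pd i (fun x => f x + g x) w = pd i f w + pd i g w := by
  simp [pd, fderiv_fun_add hf hg]

lemma pd_mul (hf : DifferentiableAt ℝ f w) (hg : DifferentiableAt ℝ g w) (i : Fin n) :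
    pd i (fun x => f x * g x) w = f w * pd i g w + g w * pd i f w := by
  simp [pd, fderiv_fun_mul hf hg]

lemma pd_exp (hf : DifferentiableAt ℝ f w) (i : Fin n) :
    pd i (fun x => Real.exp (f x)) w = Real.exp (f w) * pd i f w := by
  simp [pd, fderiv_exp hf]

lemma pd_neg (i : Fin n) : pd i (fun x => -f x) w = -pd i f w := by
  simp [pd]

lemma pd_apply (i j : Fin n) : pd i (fun x => x j) w = (Pi.single i 1 : Fin n → ℝ) j := by
  simp only [pd, (hasFDerivAt_apply j w).fderiv]
  rfl

lemma pd_comp_reindex (σ : Fin m → Fin n) {f : (Fin m → ℝ) → ℝ}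
    (hf : DifferentiableAt ℝ f (fun j => w (σ j))) (i : Fin n) :
    pd i (fun x => f (fun j => x (σ j))) w =
      fderiv ℝ f (fun j => w (σ j)) (fun j => (Pi.single i 1 : Fin n → ℝ) (σ j)) := by
  have h : HasFDerivAt (fun x => f (fun j => x (σ j)))
      ((fderiv ℝ f _).comp (Pi.compRightL ℝ (fun _ => ℝ) σ)) w :=
    hf.hasFDerivAt.comp w (Pi.compRightL ℝ (fun _ => ℝ) σ).hasFDerivAt
  simp only [pd, h.fderiv]
  rfl

lemma pd_comp_reindex_of_injective {σ : Fin m → Fin n} (hσ : σ.Injective) {f : (Fin m → ℝ) → ℝ}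
    (hf : DifferentiableAt ℝ f (fun j => w (σ j))) (j : Fin m) :
    pd (σ j) (fun x => f (fun k => x (σ k))) w = pd j f (fun k => w (σ k)) := by
  rw [pd_comp_reindex σ hf]
  congr 2
  ext k
  simp [Pi.single_apply, hσ.eq_iff]

lemma pd_comp_reindex_of_notMem_range {σ : Fin m → Fin n} {i : Fin n} (hi : ∀ j, σ j ≠ i)
    {f : (Fin m → ℝ) → ℝ} (hf : DifferentiableAt ℝ f (fun j => w (σ j))) :
    pd i (fun x => f (fun k => x (σ k))) w = 0 := by
  rw [pd_comp_reindex σ hf]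
  have h0 : (fun k => (Pi.single i 1 : Fin n → ℝ) (σ k)) = 0 := by
    ext k
    simp [hi]
  rw [h0, map_zero]

end PartialDerivative

lemma forall_add_exp_neg_mul_eq_zero_iff {A B : ℝ} :
    (∀ t : ℝ, A + Real.exp (-t) * B = 0) ↔ A = 0 ∧ B = 0 := by
  refine ⟨fun h => ?_, fun ⟨hA, hB⟩ t => by simp [hA, hB]⟩
  have h0 := h 0
  have h1 := h (-1)
  simp only [neg_zero, Real.exp_zero, one_mul, neg_neg] at h0 h1
  have hB : B = 0 := by
    have he : Real.exp 1 - 1 ≠ 0 := sub_ne_zero.mpr (by simp)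
    have hB' : (Real.exp 1 - 1) * B = 0 := by linear_combination h1 - h0
    exact (mul_eq_zero.mp hB').resolve_left he
  exact ⟨by linear_combination h0 - hB, hB⟩

lemma forall_proj134_iff {P : (Fin 3 → ℝ) → ℝ → Prop} :
    (∀ w : Fin 4 → ℝ, P (proj134 w) (w 1)) ↔ ∀ v t, P v t := by
  refine ⟨fun h v t => ?_, fun h w => h _ _⟩
  have hv : proj134 ![v 0, t, v 1, v 2] = v := by
    funext j; fin_cases j <;> rfl
  simpa [hv] using h ![v 0, t, v 1, v 2]

section Ansatz

variable {p q : (Fin 3 → ℝ) → ℝ} {w : Fin 4 → ℝ}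

lemma pd_comp_proj134 {f : (Fin 3 → ℝ) → ℝ} (hf : DifferentiableAt ℝ f (proj134 w)) :
    pd 0 (fun x => f (proj134 x)) w = pd 0 f (proj134 w) ∧
      pd 1 (fun x => f (proj134 x)) w = 0 ∧
      pd 2 (fun x => f (proj134 x)) w = pd 1 f (proj134 w) ∧
      pd 3 (fun x => f (proj134 x)) w = pd 2 f (proj134 w) := by
  have hσ : (![0, 2, 3] : Fin 3 → Fin 4).Injective := by decide
  exact ⟨pd_comp_reindex_of_injective hσ hf 0, pd_comp_reindex_of_notMem_range (by decide) hf,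
    pd_comp_reindex_of_injective hσ hf 1, pd_comp_reindex_of_injective hσ hf 2⟩

lemma heavenly_residual_eq (hp : DifferentiableAt ℝ p (proj134 w))
    (hq : DifferentiableAt ℝ q (proj134 w)) :
    pd 3 (fun x => Real.exp (x 1) + p (proj134 x)) w -
        pd 2 (fun x => q (proj134 x) * Real.exp (-(x 1))) w -
      (pd 0 (fun x => Real.exp (x 1) + p (proj134 x)) w *
          pd 1 (fun x => q (proj134 x) * Real.exp (-(x 1))) w -
        pd 1 (fun x => Real.exp (x 1) + p (proj134 x)) w *
          pd 0 (fun x => q (proj134 x) * Real.exp (-(x 1))) w) =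
      pd 2 p (proj134 w) + pd 0 q (proj134 w) +
        Real.exp (-(w 1)) * (pd 0 p (proj134 w) * q (proj134 w) - pd 1 q (proj134 w)) := by
  obtain ⟨hp0, hp1, -, hp3⟩ := pd_comp_proj134 hp
  obtain ⟨hq0, hq1, hq2, -⟩ := pd_comp_proj134 hq
  have hpπ : DifferentiableAt ℝ (fun x => p (proj134 x)) w := by unfold proj134; fun_prop
  have hqπ : DifferentiableAt ℝ (fun x => q (proj134 x)) w := by unfold proj134; fun_prop
  have hexp : DifferentiableAt ℝ (fun x : Fin 4 → ℝ => Real.exp (x 1)) w := by fun_prop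
  have hexpneg : DifferentiableAt ℝ (fun x : Fin 4 → ℝ => Real.exp (-(x 1))) w := by fun_prop
  have hcoord : DifferentiableAt ℝ (fun x : Fin 4 → ℝ => x 1) w := by fun_prop
  have hneg : DifferentiableAt ℝ (fun x : Fin 4 → ℝ => -(x 1)) w := by fun_prop
  simp only [pd_add hexp hpπ, pd_mul hqπ hexpneg, pd_exp hcoord, pd_exp hneg, pd_neg,
    pd_apply, hp0, hp1, hp3, hq0, hq1, hq2, Pi.single_apply, Fin.reduceEq, ↓reduceIte]
  have hinv : Real.exp (w 1) * Real.exp (-(w 1)) = 1 := by rw [← Real.exp_add]; simp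
  linear_combination pd 0 q (proj134 w) * hinv

end Ansatz

/-- reduction towards the Boyer–Finley equation: with
`a = e^{y²} + p(y¹,y³,y⁴)` and `b = q(y¹,y³,y⁴) e^{−y²}`, the equation
`a_{y⁴} − b_{y³} = a_{y¹} b_{y²} − a_{y²} b_{y¹}` holds at every point of `ℝ⁴` iff the
2-component system `p_{y⁴} + q_{y¹} = 0`, `q_{y³} = p_{y¹} q` holds at every point of `ℝ³`. -/
theorem stmt15 (p q : (Fin 3 → ℝ) → ℝ) (hp : ContDiff ℝ (⊤ : ℕ∞) p)
    (hq : ContDiff ℝ (⊤ : ℕ∞) q) :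
    (∀ w : Fin 4 → ℝ,
      pd 3 (fun w' => Real.exp (w' 1) + p (proj134 w')) w -
          pd 2 (fun w' => q (proj134 w') * Real.exp (-(w' 1))) w =
        pd 0 (fun w' => Real.exp (w' 1) + p (proj134 w')) w *
            pd 1 (fun w' => q (proj134 w') * Real.exp (-(w' 1))) w -
          pd 1 (fun w' => Real.exp (w' 1) + p (proj134 w')) w *
            pd 0 (fun w' => q (proj134 w') * Real.exp (-(w' 1))) w) ↔
    (∀ v : Fin 3 → ℝ, pd 2 p v + pd 0 q v = 0 ∧ pd 1 q v = pd 0 p v * q v) := by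
  have hp' : Differentiable ℝ p := hp.differentiable (by simp)
  have hq' : Differentiable ℝ q := hq.differentiable (by simp)
  simp only [← sub_eq_zero (a := pd 3 _ _ - _), heavenly_residual_eq (hp' _) (hq' _)]
  rw [forall_proj134_iff (P := fun v t => pd 2 p v + pd 0 q v +
    Real.exp (-t) * (pd 0 p v * q v - pd 1 q v) = 0)]
  refine forall_congr' fun v => forall_add_exp_neg_mul_eq_zero_iff.trans ?_
  rw [sub_eq_zero, eq_comm (a := pd 0 p v * q v)]
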